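/- arXiv:2011.00827 — 5 statements merged into one kernel-verified Lean document; each statement's English description precedes it below -/
import Mathlib

section
/- Let â, b̂, y ∈ ℝ≥0[[z]] be formal power series with nonnegative coefficients such that the constant coefficient of â is zero and y(z) ≪ â(z)·y(z) + b̂(z). Then y(z) ≪ b̂(z)/(1 − â(z)), where 1 − â(z) is invertible in ℝ[[z]] since its constant coefficient is 1. -/
/-!
STATEMENT 3: majorant bound for solutions of a linear inequality
`y ≪ â·y + b̂` with `â₀ = 0`: one gets `y ≪ b̂/(1 − â)`.
-/

open PowerSeries

/-- `f ≪ f̂` for real power series: `|f_n| ≤ f̂_n` for all `n`. -/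
def MajR (f fhat : PowerSeries ℝ) : Prop :=
  ∀ n : ℕ, |PowerSeries.coeff n f| ≤ PowerSeries.coeff n fhat

theorem maj_linear
    (ahat bhat y : PowerSeries ℝ)
    (hahat : ∀ n, 0 ≤ PowerSeries.coeff n ahat)
    (hbhat : ∀ n, 0 ≤ PowerSeries.coeff n bhat)
    (hy : ∀ n, 0 ≤ PowerSeries.coeff n y)
    (ha0 : PowerSeries.constantCoeff ahat = 0)
    (hmaj : MajR y (ahat * y + bhat)) :
    MajR y (bhat * (1 - ahat)⁻¹) := by
  set u : PowerSeries ℝ := (1 - ahat)⁻¹ with hu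
  have hc : constantCoeff (1 - ahat) ≠ 0 := by
    simp [ha0]
  have hinv : (1 - ahat) * u = 1 := PowerSeries.mul_inv_cancel _ hc
  have hkey : bhat * u = bhat + ahat * (bhat * u) := by
    linear_combination bhat * hinv
  intro n
  induction n using Nat.strong_induction_on with
  | _ n ih =>
    rw [abs_of_nonneg (hy n)]
    have h1 : coeff n y ≤ coeff n (ahat * y) + coeff n bhat := by
      have := hmaj n
      rw [abs_of_nonneg (hy n), map_add] at this
      exact this
    have h2 : coeff n (ahat * y) ≤ coeff n (ahat * (bhat * u)) := by
      rw [PowerSeries.coeff_mul, PowerSeries.coeff_mul]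
      apply Finset.sum_le_sum
      intro p hp
      rcases Nat.eq_zero_or_pos p.1 with h0 | hpos
      · have : coeff p.1 ahat = 0 := by
          rw [h0]; simpa using ha0
        simp [this]
      · have hlt : p.2 < n := by
          have := Finset.HasAntidiagonal.mem_antidiagonal.mp hp
          omega
        have := ih p.2 hlt
        rw [abs_of_nonneg (hy p.2)] at this
        exact mul_le_mul_of_nonneg_left this (hahat p.1)
    have h3 : coeff n (bhat * u) = coeff n bhat + coeff n (ahat * (bhat * u)) := by
      conv_lhs => rw [hkey]
      rw [map_add]
    rw [h3]
    linarith
end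

section
/- Let r ≥ 1, let a_0, …, a_{r−1}, b ∈ ℂ[[z]] and â_0, …, â_{r−1}, b̂ ∈ ℝ≥0[[z]] be formal power series with a_k ≪ â_k for 0 ≤ k < r and b ≪ b̂. Assume ŷ ∈ ℝ[[z]] is a solution of the formal differential equation ŷ^{(r)}(z) − â_{r−1}(z)ŷ^{(r−1)}(z) − ⋯ − â_1(z)ŷ′(z) − â_0(z)ŷ(z) = b̂(z). Then every solution y ∈ ℂ[[z]] of y^{(r)}(z) − a_{r−1}(z)y^{(r−1)}(z) − ⋯ − a_1(z)y′(z) − a_0(z)y(z) = b(z) whose first r coefficients satisfy |y_n| ≤ ŷ_n for 0 ≤ n ≤ r−1 satisfies y ≪ ŷ. -/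
/-!
STATEMENT 4: Cauchy's method of majorants for nonsingular linear
differential equations: if `ŷ` solves the majorant equation
`ŷ⁽ʳ⁾ − Σ_k â_k ŷ⁽ᵏ⁾ = b̂` and `y` solves `y⁽ʳ⁾ − Σ_k a_k y⁽ᵏ⁾ = b` with
`a_k ≪ â_k`, `b ≪ b̂`, `|y_n| ≤ ŷ_n` for `n < r`, then `y ≪ ŷ`.
-/

open PowerSeries Finset

/-- `f ≪ f̂`: the real series `f̂` is a majorant series of the complex series `f`. -/
def Maj (f : PowerSeries ℂ) (fhat : PowerSeries ℝ) : Prop :=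
  ∀ n : ℕ, ‖PowerSeries.coeff n f‖ ≤ PowerSeries.coeff n fhat

/-- Formal derivative of a complex power series. -/
noncomputable def dzC : PowerSeries ℂ → PowerSeries ℂ := PowerSeries.derivativeFun

/-- Formal derivative of a real power series. -/
noncomputable def dzR : PowerSeries ℝ → PowerSeries ℝ := PowerSeries.derivativeFun

lemma coeff_dz_iter {R : Type*} [CommRing R] (k : ℕ) (f : PowerSeries R) (n : ℕ) :
    PowerSeries.coeff n (PowerSeries.derivativeFun^[k] f) =
      PowerSeries.coeff (n + k) f * ((∏ i ∈ range k, (n + i + 1) : ℕ) : R) := by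
  induction k generalizing f with
  | zero => simp
  | succ k ih =>
    rw [Function.iterate_succ_apply, ih, show PowerSeries.coeff (n + k) f.derivativeFun = PowerSeries.coeff (n + k + 1) f * (↑(n + k) + 1)
      from PowerSeries.coeff_derivative f (n + k), prod_range_succ,
      show n + (k + 1) = n + k + 1 by omega]
    push_cast
    ring

theorem maj_deq
    (r : ℕ) (hr : 1 ≤ r)
    (a : ℕ → PowerSeries ℂ) (b : PowerSeries ℂ)
    (ahat : ℕ → PowerSeries ℝ) (bhat : PowerSeries ℝ)
    (hahat : ∀ k < r, ∀ n, 0 ≤ PowerSeries.coeff n (ahat k))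
    (hbhat : ∀ n, 0 ≤ PowerSeries.coeff n bhat)
    (ha : ∀ k < r, Maj (a k) (ahat k)) (hb : Maj b bhat)
    (yhat : PowerSeries ℝ)
    (hyhat : dzR^[r] yhat - ∑ k ∈ Finset.range r, ahat k * dzR^[k] yhat = bhat)
    (y : PowerSeries ℂ)
    (hy : dzC^[r] y - ∑ k ∈ Finset.range r, a k * dzC^[k] y = b)
    (hini : ∀ n < r, ‖PowerSeries.coeff n y‖ ≤ PowerSeries.coeff n yhat) :
    Maj y yhat := by
  intro n
  induction n using Nat.strong_induction_on with
  | _ n IH =>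
  rcases lt_or_ge n r with h | h
  · exact hini n h
  · obtain ⟨m, rfl⟩ : ∃ m, n = m + r := ⟨n - r, (Nat.sub_add_cancel h).symm⟩
    set P : ℕ := ∏ i ∈ range r, (m + i + 1) with hPdef
    have hP : 0 < P := prod_pos (fun i _ => by omega)
    -- complex equation at coefficient m
    have hyC : PowerSeries.coeff (m + r) y * (P : ℂ) =
        PowerSeries.coeff m b + ∑ k ∈ range r, PowerSeries.coeff m (a k * dzC^[k] y) := by
      have := congrArg (PowerSeries.coeff m) hy
      simp only [map_sub, map_sum] at this
      have h2 : PowerSeries.coeff m (dzC^[r] y) =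
          PowerSeries.coeff (m + r) y * (P : ℂ) := by
        simpa [dzC, hPdef] using coeff_dz_iter (R := ℂ) r y m
      rw [h2] at this
      linear_combination this
    have hyR : PowerSeries.coeff (m + r) yhat * (P : ℝ) =
        PowerSeries.coeff m bhat + ∑ k ∈ range r, PowerSeries.coeff m (ahat k * dzR^[k] yhat) := by
      have := congrArg (PowerSeries.coeff m) hyhat
      simp only [map_sub, map_sum] at this
      have h2 : PowerSeries.coeff m (dzR^[r] yhat) =
          PowerSeries.coeff (m + r) yhat * (P : ℝ) := by
        simpa [dzR, hPdef] using coeff_dz_iter (R := ℝ) r yhat m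
      rw [h2] at this
      linear_combination this
    have hterm : ∀ k < r, ‖PowerSeries.coeff m (a k * dzC^[k] y)‖ ≤
        PowerSeries.coeff m (ahat k * dzR^[k] yhat) := by
      intro k hk
      rw [PowerSeries.coeff_mul, PowerSeries.coeff_mul]
      refine (norm_sum_le _ _).trans (Finset.sum_le_sum fun p hp => ?_)
      rw [Finset.HasAntidiagonal.mem_antidiagonal] at hp
      have hp2 : p.2 + k < m + r := by omega
      rw [norm_mul]
      have hd : ‖PowerSeries.coeff p.2 (dzC^[k] y)‖ ≤
          PowerSeries.coeff p.2 (dzR^[k] yhat) := by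
        rw [show dzC = PowerSeries.derivativeFun from rfl,
          show dzR = PowerSeries.derivativeFun from rfl,
          coeff_dz_iter, coeff_dz_iter, norm_mul, Complex.norm_natCast]
        have h1 := IH (p.2 + k) hp2
        have hnn : (0 : ℝ) ≤ ((∏ i ∈ range k, (p.2 + i + 1) : ℕ) : ℝ) := by positivity
        gcongr
      have hdnn : (0 : ℝ) ≤ PowerSeries.coeff p.2 (dzR^[k] yhat) :=
        le_trans (norm_nonneg _) hd
      have h1 := ha k hk p.1
      have h2 := hahat k hk p.1
      exact mul_le_mul h1 hd (norm_nonneg _) h2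
    have key : ‖PowerSeries.coeff (m + r) y‖ * (P : ℝ) ≤
        PowerSeries.coeff (m + r) yhat * (P : ℝ) := by
      rw [hyR]
      calc ‖PowerSeries.coeff (m + r) y‖ * (P : ℝ)
          = ‖PowerSeries.coeff (m + r) y * (P : ℂ)‖ := by
            rw [norm_mul, Complex.norm_natCast]
        _ = ‖PowerSeries.coeff m b + ∑ k ∈ range r, PowerSeries.coeff m (a k * dzC^[k] y)‖ := by
            rw [hyC]
        _ ≤ ‖PowerSeries.coeff m b‖ + ∑ k ∈ range r, ‖PowerSeries.coeff m (a k * dzC^[k] y)‖ :=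
            (norm_add_le _ _).trans (by gcongr; exact norm_sum_le _ _)
        _ ≤ PowerSeries.coeff m bhat + ∑ k ∈ range r, PowerSeries.coeff m (ahat k * dzR^[k] yhat) := by
            gcongr with k hk
            · exact hb m
            · exact hterm k (mem_range.mp hk)
    have hPpos : (0 : ℝ) < (P : ℝ) := by exact_mod_cast hP
    exact le_of_mul_le_mul_right key hPpos
end

section
/- Let â_0, â_1, b̂, y ∈ ℝ≥0[[z]] be formal power series with nonnegative coefficients such that the constant coefficient of â_1 is zero and y′(z) ≪ â_1(z)y′(z) + â_0(z)y(z) + b̂(z). Then the equation ŷ′(z) = â_1(z)ŷ′(z) + â_0(z)ŷ(z) + b̂(z) admits a unique formal power series solution ŷ with ŷ(0) = y(0), and one has y ≪ ŷ. -/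
/-!
STATEMENT 5: first-order majorant differential inequality: if
`y′ ≪ â₁ y′ + â₀ y + b̂` with `â₁(0) = 0` (all series having nonnegative
coefficients), then the equation `ŷ′ = â₁ ŷ′ + â₀ ŷ + b̂` has a unique
solution `ŷ` with `ŷ(0) = y(0)`, and `y ≪ ŷ`.
-/

open PowerSeries

lemma coeff_dzR (f : PowerSeries ℝ) (n : ℕ) :
    coeff n (dzR f) = coeff (n+1) f * ((n : ℝ) + 1) := by
  have h := coeff_derivative f n
  exact h

/-- Coefficient formula for the right-hand side `a1 * f' + a0 * f + b`. -/
lemma rhs_coeff (a1 a0 b f : PowerSeries ℝ) (ha1 : constantCoeff a1 = 0) (n : ℕ) :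
    coeff n (a1 * dzR f + a0 * f + b) =
      (∑ j ∈ Finset.range n, coeff (j+1) a1 * (coeff (n-j) f * ((n-j : ℕ) : ℝ)))
      + (∑ i ∈ Finset.range (n+1), coeff i a0 * coeff (n-i) f) + coeff n b := by
  rw [map_add, map_add, coeff_mul, coeff_mul,
    Finset.Nat.sum_antidiagonal_eq_sum_range_succ_mk,
    Finset.Nat.sum_antidiagonal_eq_sum_range_succ_mk,
    Finset.sum_range_succ' (fun i => coeff i a1 * coeff (n - i) (dzR f))]
  have h0 : coeff 0 a1 = 0 := by rwa [coeff_zero_eq_constantCoeff]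
  rw [h0, zero_mul, add_zero]
  congr 1
  congr 1
  apply Finset.sum_congr rfl
  intro j hj
  have hjn : j < n := Finset.mem_range.mp hj
  simp only [coeff_dzR]
  have h1 : n - (j+1) + 1 = n - j := by omega
  rw [h1]
  congr 1
  rw [← h1]
  push_cast
  ring

/-- Coefficients of the formal solution, defined by strong recursion. -/
noncomputable def solR (a1 a0 b : PowerSeries ℝ) (c0 : ℝ) : ℕ → ℝ
  | 0 => c0
  | (n+1) =>
      ((∑ j ∈ Finset.range n, coeff (j+1) a1 * (solR a1 a0 b c0 (n-j) * ((n-j : ℕ) : ℝ)))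
        + (∑ i ∈ Finset.range (n+1), coeff i a0 * solR a1 a0 b c0 (n-i)) + coeff n b)
        / ((n : ℝ) + 1)
  decreasing_by all_goals omega

lemma solR_succ (a1 a0 b : PowerSeries ℝ) (c0 : ℝ) (n : ℕ) :
    solR a1 a0 b c0 (n+1) =
      ((∑ j ∈ Finset.range n, coeff (j+1) a1 * (solR a1 a0 b c0 (n-j) * ((n-j : ℕ) : ℝ)))
        + (∑ i ∈ Finset.range (n+1), coeff i a0 * solR a1 a0 b c0 (n-i)) + coeff n b)
        / ((n : ℝ) + 1) := by
  rw [solR]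

/-- The coefficient recursion satisfied by any solution of the equation. -/
lemma sol_rel (a1 a0 b f : PowerSeries ℝ) (ha1 : constantCoeff a1 = 0)
    (hf : dzR f = a1 * dzR f + a0 * f + b) (n : ℕ) :
    coeff (n+1) f * ((n : ℝ) + 1) =
      (∑ j ∈ Finset.range n, coeff (j+1) a1 * (coeff (n-j) f * ((n-j : ℕ) : ℝ)))
      + (∑ i ∈ Finset.range (n+1), coeff i a0 * coeff (n-i) f) + coeff n b := by
  have := congrArg (coeff n) hf
  rw [rhs_coeff a1 a0 b f ha1 n] at this
  simpa only [coeff_dzR] using this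

theorem maj_diff_ineq
    (ahat0 ahat1 bhat y : PowerSeries ℝ)
    (h0 : ∀ n, 0 ≤ PowerSeries.coeff n ahat0)
    (h1 : ∀ n, 0 ≤ PowerSeries.coeff n ahat1)
    (hb : ∀ n, 0 ≤ PowerSeries.coeff n bhat)
    (hy : ∀ n, 0 ≤ PowerSeries.coeff n y)
    (ha1const : PowerSeries.constantCoeff ahat1 = 0)
    (hineq : MajR (dzR y) (ahat1 * dzR y + ahat0 * y + bhat)) :
    (∃! yhat : PowerSeries ℝ,
      dzR yhat = ahat1 * dzR yhat + ahat0 * yhat + bhat ∧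
      PowerSeries.constantCoeff yhat = PowerSeries.constantCoeff y) ∧
    (∀ yhat : PowerSeries ℝ,
      dzR yhat = ahat1 * dzR yhat + ahat0 * yhat + bhat →
      PowerSeries.constantCoeff yhat = PowerSeries.constantCoeff y →
      MajR y yhat) := by
  set c0 : ℝ := PowerSeries.constantCoeff y with hc0
  set Y : PowerSeries ℝ := PowerSeries.mk (solR ahat1 ahat0 bhat c0) with hY
  have hYcoeff : ∀ n, coeff n Y = solR ahat1 ahat0 bhat c0 n := fun n => coeff_mk n _
  have hYconst : PowerSeries.constantCoeff Y = c0 := by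
    rw [← coeff_zero_eq_constantCoeff, hYcoeff]; simp [solR]
  have hpos : ∀ n : ℕ, (0 : ℝ) < (n : ℝ) + 1 := fun n => by positivity
  have hYsol : dzR Y = ahat1 * dzR Y + ahat0 * Y + bhat := by
    ext n
    rw [rhs_coeff ahat1 ahat0 bhat Y ha1const n]
    simp only [coeff_dzR, hYcoeff]
    rw [solR_succ, div_mul_cancel₀ _ (hpos n).ne']
  -- uniqueness of coefficients
  have huniq : ∀ g : PowerSeries ℝ,
      dzR g = ahat1 * dzR g + ahat0 * g + bhat →
      PowerSeries.constantCoeff g = c0 →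
      ∀ n, coeff n g = solR ahat1 ahat0 bhat c0 n := by
    intro g hg hgc n
    induction n using Nat.strong_induction_on with
    | _ n ih =>
      match n with
      | 0 => rw [coeff_zero_eq_constantCoeff, hgc]; simp [solR]
      | (m+1) =>
        have hrel := sol_rel ahat1 ahat0 bhat g ha1const hg m
        have : coeff (m+1) g =
            ((∑ j ∈ Finset.range m, coeff (j+1) ahat1 *
                (coeff (m-j) g * ((m-j : ℕ) : ℝ)))
              + (∑ i ∈ Finset.range (m+1), coeff i ahat0 * coeff (m-i) g)
              + coeff m bhat) / ((m : ℝ) + 1) := by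
          rw [eq_div_iff (hpos m).ne']; exact hrel
        have e1 : (∑ j ∈ Finset.range m, coeff (j+1) ahat1 *
                (coeff (m-j) g * ((m-j : ℕ) : ℝ)))
            = ∑ j ∈ Finset.range m, coeff (j+1) ahat1 *
                (solR ahat1 ahat0 bhat c0 (m-j) * ((m-j : ℕ) : ℝ)) := by
          apply Finset.sum_congr rfl; intro j hj
          rw [ih (m - j) (by omega)]
        have e2 : (∑ i ∈ Finset.range (m+1), coeff i ahat0 * coeff (m-i) g)
            = ∑ i ∈ Finset.range (m+1), coeff i ahat0 * solR ahat1 ahat0 bhat c0 (m-i) := by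
          apply Finset.sum_congr rfl; intro i hi
          rw [ih (m - i) (by omega)]
        rw [this, e1, e2, solR_succ]
  constructor
  · refine ⟨Y, ⟨hYsol, hYconst⟩, ?_⟩
    intro g ⟨hg, hgc⟩
    ext n
    rw [huniq g hg hgc n, hYcoeff]
  · -- majorization
    intro f hf hfc
    have key : ∀ n, coeff n y ≤ coeff n f := by
      intro n
      induction n using Nat.strong_induction_on with
      | _ n ih =>
        match n with
        | 0 =>
          rw [coeff_zero_eq_constantCoeff, hfc]
        | (m+1) =>
          have hrelf := sol_rel ahat1 ahat0 bhat f ha1const hf m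
          have hstep : coeff (m+1) y * ((m : ℝ) + 1) ≤ coeff (m+1) f * ((m : ℝ) + 1) := by
            have h2 : coeff (m+1) y * ((m : ℝ) + 1)
                ≤ coeff m (ahat1 * dzR y + ahat0 * y + bhat) := by
              have := hineq m
              simp only [coeff_dzR] at this
              exact le_trans (le_abs_self _) this
            rw [rhs_coeff ahat1 ahat0 bhat y ha1const m] at h2
            rw [hrelf]
            refine le_trans h2 ?_
            gcongr with j hj i hi
            · exact h1 _
            · exact ih (m - j) (by omega)
            · exact h0 _
            · exact ih (m - i) (by omega)
          exact le_of_mul_le_mul_right hstep (hpos m)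
    intro n
    rw [abs_of_nonneg (hy n)]
    exact key n
end

section
/- Let x ∈ ℝ, let (p_n)_{n≥−1} be a real sequence with p_0 = 1 satisfying the recurrence (n+1)·p_{n+1} = (2n+1)·x·p_n − n·p_{n−1} for all n ≥ 0, and assume |p_n| ≤ 1 for all n ≥ 0 (as holds when p_n = P_n(x) is the Legendre polynomial evaluated at x ∈ [−1,1]). Let (p̃_n)_{n≥−1} be a real sequence with p̃_0 = 1 satisfying the perturbed recurrence p̃_{n+1} = ((2n+1)·x·p̃_n − n·p̃_{n−1})/(n+1) + ε_n for all n ≥ 0, where |ε_n| ≤ ε̄ for all n. Then for all n ≥ 0, |p̃_n − p_n| ≤ (n+1)(n+2)·ε̄/4. -/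
/-!
STATEMENT 8: error propagation in the three-term recurrence for Legendre
polynomials evaluated in fixed-point arithmetic: the global error after `n`
steps is at most `(n+1)(n+2)·ε̄/4`.
-/

open Finset


noncomputable def legT (P : ℕ → ℝ) (l : ℕ) : ℝ :=
  ∑ i ∈ Finset.range (l+1), P i * P (l - i)

noncomputable def legG (P : ℕ → ℝ) (ε : ℕ → ℝ) (j : ℕ) : ℝ :=
  ∑ k ∈ Finset.range j, ((k:ℝ)+1) * ε k * P (j - 1 - k)

noncomputable def legF (P : ℕ → ℝ) (ε : ℕ → ℝ) (m : ℕ) : ℝ :=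
  ∑ i ∈ Finset.range m, (1/((i:ℝ)+1)) * legG P ε (i+1) * P (m - 1 - i)

noncomputable def legH (P : ℕ → ℝ) (ε : ℕ → ℝ) (m : ℕ) : ℝ :=
  ∑ i ∈ Finset.range m, legG P ε (i+1) * P (m - 1 - i)

lemma sum_swap_aux (f : ℕ → ℕ → ℝ) :
    ∀ m : ℕ, (∑ i ∈ Finset.range m, ∑ k ∈ Finset.range (i+1), f k i)
      = ∑ k ∈ Finset.range m, ∑ d ∈ Finset.range (m - k), f k (k + d) := by
  intro m
  induction m with
  | zero => simp
  | succ m ih =>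
      rw [Finset.sum_range_succ, ih, Finset.sum_range_succ]
      conv_rhs => rw [Finset.sum_range_succ]
      have h1 : ∀ k ∈ Finset.range m,
          (∑ d ∈ Finset.range (m + 1 - k), f k (k + d))
            = (∑ d ∈ Finset.range (m - k), f k (k + d)) + f k m := by
        intro k hk
        have hk' : k ≤ m := Nat.le_of_lt (Finset.mem_range.mp hk)
        have : m + 1 - k = (m - k) + 1 := by omega
        rw [this, Finset.sum_range_succ]
        congr 2
        omega
      conv_rhs => rw [Finset.sum_congr rfl h1, Finset.sum_add_distrib]
      have h2 : (∑ d ∈ Finset.range (m + 1 - m), f m (m + d)) = f m m := by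
        have : m + 1 - m = 1 := by omega
        rw [this]
        simp
      rw [h2]
      ring

lemma legH_eq (P : ℕ → ℝ) (ε : ℕ → ℝ) (m : ℕ) :
    legH P ε m = ∑ k ∈ Finset.range m, ((k:ℝ)+1) * ε k * legT P (m - 1 - k) := by
  have h0 : legH P ε m
      = ∑ i ∈ Finset.range m, ∑ k ∈ Finset.range (i+1),
          (((k:ℝ)+1) * ε k * P (i - k)) * P (m - 1 - i) := by
    unfold legH legG
    refine Finset.sum_congr rfl ?_
    intro i _
    rw [Finset.sum_mul]
    refine Finset.sum_congr rfl ?_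
    intro k hk
    have : i + 1 - 1 - k = i - k := by omega
    rw [this]
  rw [h0, sum_swap_aux (fun k i => (((k:ℝ)+1) * ε k * P (i - k)) * P (m - 1 - i)) m]
  refine Finset.sum_congr rfl ?_
  intro k hk
  have hk' : k < m := Finset.mem_range.mp hk
  unfold legT
  have hr : m - k = (m - 1 - k) + 1 := by omega
  rw [hr, Finset.mul_sum]
  refine Finset.sum_congr rfl ?_
  intro d hd
  have h1 : k + d - k = d := by omega
  have h2 : m - 1 - (k + d) = m - 1 - k - d := by omega
  rw [h1, h2]
  ring

lemma legT_rec (P : ℕ → ℝ) (x : ℝ)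
    (hrec : ∀ c : ℕ, ((c:ℝ)+1) * P (c+1) = (2*(c:ℝ)+1) * x * P c - (c:ℝ) * P (c-1)) :
    ∀ l : ℕ, legT P (l+2) = 2 * x * legT P (l+1) - legT P l := by
  intro l
  have hl2 : ((l:ℝ)+2) ≠ 0 := by positivity
  have key : ((l:ℝ)+2) * legT P (l+2)
      = ((l:ℝ)+2) * (2 * x * legT P (l+1) - legT P l) := by
    -- expand LHS
    have expand : ((l:ℝ)+2) * legT P (l+2)
        = (∑ i ∈ Finset.range (l+3), ((i:ℝ)) * (P i * P (l+2-i)))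
          + (∑ i ∈ Finset.range (l+3), ((l:ℝ)+2-(i:ℝ)) * (P i * P (l+2-i))) := by
      unfold legT
      rw [Finset.mul_sum, ← Finset.sum_add_distrib]
      refine Finset.sum_congr rfl ?_
      intro i _
      ring
    -- S2 : shift the first sum
    have S2 : (∑ i ∈ Finset.range (l+3), ((i:ℝ)) * (P i * P (l+2-i)))
        = ∑ i ∈ Finset.range (l+2), (((i:ℝ)+1) * P (i+1)) * P (l+1-i) := by
      rw [Finset.sum_range_succ' (fun i => ((i:ℝ)) * (P i * P (l+2-i))) (l+2)]
      simp only [Nat.cast_zero, zero_mul, add_zero]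
      refine Finset.sum_congr rfl ?_
      intro i hi
      have : l + 2 - (i+1) = l + 1 - i := by omega
      rw [this]
      push_cast
      ring
    -- rewrite S2 with the recurrence
    have S2' : (∑ i ∈ Finset.range (l+3), ((i:ℝ)) * (P i * P (l+2-i)))
        = ∑ i ∈ Finset.range (l+2),
            ((2*(i:ℝ)+1) * x * P i - (i:ℝ) * P (i-1)) * P (l+1-i) := by
      rw [S2]
      refine Finset.sum_congr rfl ?_
      intro i _
      rw [hrec i]
    -- S1 : the second sum, last term vanishes
    have S1 : (∑ i ∈ Finset.range (l+3), ((l:ℝ)+2-(i:ℝ)) * (P i * P (l+2-i)))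
        = ∑ i ∈ Finset.range (l+2), P i * (((l+1-i:ℕ):ℝ)+1) * P ((l+1-i)+1) := by
      rw [Finset.sum_range_succ]
      have hz : ((l:ℝ)+2-((l+2:ℕ):ℝ)) = 0 := by push_cast; ring
      rw [show (((l+2:ℕ)):ℝ) = ((l:ℝ)+2) from by push_cast; ring] at *
      simp only [sub_self, zero_mul, add_zero]
      refine Finset.sum_congr rfl ?_
      intro i hi
      have hi' : i < l + 2 := Finset.mem_range.mp hi
      have h1 : l + 2 - i = (l + 1 - i) + 1 := by omega
      have h2 : (((l+1-i:ℕ)):ℝ) + 1 = (l:ℝ) + 2 - (i:ℝ) := by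
        have : ((l+1-i:ℕ):ℝ) = (l:ℝ)+1-(i:ℝ) := by
          have : i ≤ l + 1 := by omega
          push_cast [Nat.cast_sub this]
          ring
        rw [this]; ring
      rw [h1, h2]
      ring
    have S1' : (∑ i ∈ Finset.range (l+3), ((l:ℝ)+2-(i:ℝ)) * (P i * P (l+2-i)))
        = ∑ i ∈ Finset.range (l+2),
            P i * ((2*((l+1-i:ℕ):ℝ)+1) * x * P (l+1-i) - ((l+1-i:ℕ):ℝ) * P (l+1-i-1)) := by
      rw [S1]
      refine Finset.sum_congr rfl ?_
      intro i _
      rw [mul_assoc, hrec (l+1-i)]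
    -- combine: coefficient of the x-part
    rw [expand, S2', S1']
    have xpart : ∀ i ∈ Finset.range (l+2),
        ((2*(i:ℝ)+1) * x * P i - (i:ℝ) * P (i-1)) * P (l+1-i)
          + P i * ((2*((l+1-i:ℕ):ℝ)+1) * x * P (l+1-i) - ((l+1-i:ℕ):ℝ) * P (l+1-i-1))
        = (2*((l:ℝ)+2)) * x * (P i * P (l+1-i))
          - (i:ℝ) * (P (i-1) * P (l+1-i)) - ((l:ℝ)+1-(i:ℝ)) * (P i * P (l-i)) := by
      intro i hi
      have hi' : i < l + 2 := Finset.mem_range.mp hi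
      have hc : ((l+1-i:ℕ):ℝ) = (l:ℝ)+1-(i:ℝ) := by
        have : i ≤ l + 1 := by omega
        push_cast [Nat.cast_sub this]; ring
      have hidx : l + 1 - i - 1 = l - i := by omega
      rw [hc, hidx]
      ring
    rw [← Finset.sum_add_distrib, Finset.sum_congr rfl xpart]
    have split : (∑ i ∈ Finset.range (l+2),
        ((2*((l:ℝ)+2)) * x * (P i * P (l+1-i))
          - (i:ℝ) * (P (i-1) * P (l+1-i)) - ((l:ℝ)+1-(i:ℝ)) * (P i * P (l-i))))
        = (2*((l:ℝ)+2)) * x * legT P (l+1)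
          - (∑ i ∈ Finset.range (l+2), (i:ℝ) * (P (i-1) * P (l+1-i)))
          - (∑ i ∈ Finset.range (l+2), ((l:ℝ)+1-(i:ℝ)) * (P i * P (l-i))) := by
      rw [Finset.sum_sub_distrib, Finset.sum_sub_distrib]
      unfold legT
      rw [Finset.mul_sum]
    rw [split]
    -- the two remaining sums: shift first, truncate second; each sums to parts of (l+2) T l
    have A : (∑ i ∈ Finset.range (l+2), (i:ℝ) * (P (i-1) * P (l+1-i)))
        = ∑ i ∈ Finset.range (l+1), ((i:ℝ)+1) * (P i * P (l-i)) := by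
      rw [Finset.sum_range_succ' (fun i => (i:ℝ) * (P (i-1) * P (l+1-i))) (l+1)]
      simp only [Nat.cast_zero, zero_mul, add_zero]
      refine Finset.sum_congr rfl ?_
      intro i _
      have h1 : i + 1 - 1 = i := by omega
      have h2 : l + 1 - (i+1) = l - i := by omega
      rw [h1, h2]
      push_cast
      ring
    have B : (∑ i ∈ Finset.range (l+2), ((l:ℝ)+1-(i:ℝ)) * (P i * P (l-i)))
        = ∑ i ∈ Finset.range (l+1), ((l:ℝ)+1-(i:ℝ)) * (P i * P (l-i)) := by
      rw [Finset.sum_range_succ]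
      have : ((l:ℝ)+1-((l+1:ℕ):ℝ)) = 0 := by push_cast; ring
      rw [this, zero_mul, add_zero]
    rw [A, B, sub_sub, ← Finset.sum_add_distrib]
    have C : (∑ i ∈ Finset.range (l+1),
        (((i:ℝ)+1) * (P i * P (l-i)) + ((l:ℝ)+1-(i:ℝ)) * (P i * P (l-i))))
        = ((l:ℝ)+2) * legT P l := by
      unfold legT
      rw [Finset.mul_sum]
      refine Finset.sum_congr rfl ?_
      intro i _
      ring
    rw [C]
    ring
  exact mul_left_cancel₀ hl2 key

lemma legH_rec (P : ℕ → ℝ) (ε : ℕ → ℝ) (x : ℝ)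
    (hT : ∀ l : ℕ, legT P (l+2) = 2 * x * legT P (l+1) - legT P l)
    (hT0 : legT P 0 = 1) (hT1 : legT P 1 = 2*x) (n : ℕ) :
    legH P ε (n+2) - 2*x*legH P ε (n+1) + legH P ε n = ((n:ℝ)+2) * ε (n+1) := by
  rw [legH_eq, legH_eq, legH_eq]
  have e2 : (∑ k ∈ Finset.range (n+2), ((k:ℝ)+1) * ε k * legT P (n+2-1-k))
      = (∑ k ∈ Finset.range n, ((k:ℝ)+1) * ε k * legT P (n+1-k))
        + ((n:ℝ)+1) * ε n * legT P 1 + ((n:ℝ)+2) * ε (n+1) * legT P 0 := by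
    rw [Finset.sum_range_succ, Finset.sum_range_succ]
    have h1 : n + 2 - 1 - (n+1) = 0 := by omega
    have h2 : n + 2 - 1 - n = 1 := by omega
    rw [h1, h2]
    push_cast
    ring
  have e1 : (∑ k ∈ Finset.range (n+1), ((k:ℝ)+1) * ε k * legT P (n+1-1-k))
      = (∑ k ∈ Finset.range n, ((k:ℝ)+1) * ε k * legT P (n-k))
        + ((n:ℝ)+1) * ε n * legT P 0 := by
    rw [Finset.sum_range_succ]
    have h1 : n + 1 - 1 - n = 0 := by omega
    rw [h1]
    have : ∀ k ∈ Finset.range n, ((k:ℝ)+1) * ε k * legT P (n+1-1-k)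
        = ((k:ℝ)+1) * ε k * legT P (n-k) := by
      intro k hk
      have : n + 1 - 1 - k = n - k := by omega
      rw [this]
    rw [Finset.sum_congr rfl this]
  rw [e2, e1]
  have key : ∀ k ∈ Finset.range n, ((k:ℝ)+1) * ε k * legT P (n+1-k)
      = 2*x*(((k:ℝ)+1) * ε k * legT P (n-k)) - ((k:ℝ)+1) * ε k * legT P (n-1-k) := by
    intro k hk
    have hk' : k < n := Finset.mem_range.mp hk
    have h1 : n + 1 - k = (n-1-k) + 2 := by omega
    have h2 : n - k = (n-1-k) + 1 := by omega
    rw [h1, h2, hT (n-1-k)]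
    ring
  rw [Finset.sum_congr rfl key, Finset.sum_sub_distrib, ← Finset.mul_sum, hT0, hT1]
  ring

lemma legF_rec (P : ℕ → ℝ) (ε : ℕ → ℝ) (x : ℝ)
    (hrec : ∀ c : ℕ, ((c:ℝ)+1) * P (c+1) = (2*(c:ℝ)+1) * x * P c - (c:ℝ) * P (c-1)) (n : ℕ) :
    ((n:ℝ)+2) * legF P ε (n+2)
      = legH P ε (n+2)
        + ((2*(n:ℝ)+3) * x * legF P ε (n+1) - 2*x*legH P ε (n+1))
        - (((n:ℝ)+1) * legF P ε n - legH P ε n) := by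
  have X : ((n:ℝ)+2) * legF P ε (n+2) - legH P ε (n+2)
      = ∑ i ∈ Finset.range (n+1), (1/((i:ℝ)+1)) * legG P ε (i+1)
          * ((2*((n-i:ℕ):ℝ)+1) * x * P (n-i) - ((n-i:ℕ):ℝ) * P (n-1-i)) := by
    unfold legF legH
    rw [Finset.mul_sum, ← Finset.sum_sub_distrib]
    have per : ∀ i ∈ Finset.range (n+2),
        ((n:ℝ)+2) * ((1/((i:ℝ)+1)) * legG P ε (i+1) * P (n+2-1-i))
          - legG P ε (i+1) * P (n+2-1-i)
        = ((n:ℝ)+1-(i:ℝ)) * ((1/((i:ℝ)+1)) * legG P ε (i+1) * P (n+1-i)) := by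
      intro i hi
      have h1 : n + 2 - 1 - i = n + 1 - i := by omega
      rw [h1]
      have hne : ((i:ℝ)+1) ≠ 0 := by positivity
      field_simp
      ring
    rw [Finset.sum_congr rfl per, Finset.sum_range_succ]
    have hz : ((n:ℝ)+1-((n+1:ℕ):ℝ)) = 0 := by push_cast; ring
    rw [hz, zero_mul, add_zero]
    refine Finset.sum_congr rfl ?_
    intro i hi
    have hi' : i < n + 1 := Finset.mem_range.mp hi
    have hc : ((n:ℝ)+1-(i:ℝ)) = ((n-i:ℕ):ℝ)+1 := by
      have : i ≤ n := by omega
      push_cast [Nat.cast_sub this]; ring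
    have hidx : n + 1 - i = (n-i) + 1 := by omega
    have hidx2 : n - i - 1 = n - 1 - i := by omega
    rw [hc, hidx]
    calc (((n-i:ℕ):ℝ)+1) * ((1/((i:ℝ)+1)) * legG P ε (i+1) * P ((n-i)+1))
        = (1/((i:ℝ)+1)) * legG P ε (i+1) * ((((n-i:ℕ):ℝ)+1) * P ((n-i)+1)) := by ring
      _ = (1/((i:ℝ)+1)) * legG P ε (i+1) * ((2*((n-i:ℕ):ℝ)+1) * x * P (n-i) - ((n-i:ℕ):ℝ) * P (n-i-1)) := by
          rw [hrec (n-i)]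
      _ = _ := by rw [hidx2]
  have Y : (2*(n:ℝ)+3) * x * legF P ε (n+1) - 2*x*legH P ε (n+1)
      = ∑ i ∈ Finset.range (n+1), (1/((i:ℝ)+1)) * legG P ε (i+1)
          * ((2*((n-i:ℕ):ℝ)+1) * x * P (n-i)) := by
    unfold legF legH
    rw [Finset.mul_sum, Finset.mul_sum, ← Finset.sum_sub_distrib]
    refine Finset.sum_congr rfl ?_
    intro i hi
    have hi' : i < n + 1 := Finset.mem_range.mp hi
    have h1 : n + 1 - 1 - i = n - i := by omega
    have hc : ((n-i:ℕ):ℝ) = (n:ℝ)-(i:ℝ) := by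
      have : i ≤ n := by omega
      push_cast [Nat.cast_sub this]; ring
    rw [h1, hc]
    have hne : ((i:ℝ)+1) ≠ 0 := by positivity
    field_simp
    ring
  have Z : ((n:ℝ)+1) * legF P ε n - legH P ε n
      = ∑ i ∈ Finset.range (n+1), (1/((i:ℝ)+1)) * legG P ε (i+1)
          * (((n-i:ℕ):ℝ) * P (n-1-i)) := by
    unfold legF legH
    rw [Finset.mul_sum, ← Finset.sum_sub_distrib, Finset.sum_range_succ]
    have hz : ((n-n:ℕ):ℝ) = 0 := by simp
    rw [hz, zero_mul, mul_zero, add_zero]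
    refine Finset.sum_congr rfl ?_
    intro i hi
    have hi' : i < n := Finset.mem_range.mp hi
    have hc : ((n-i:ℕ):ℝ) = (n:ℝ)-(i:ℝ) := by
      have : i ≤ n := by omega
      push_cast [Nat.cast_sub this]; ring
    rw [hc]
    have hne : ((i:ℝ)+1) ≠ 0 := by positivity
    field_simp
    ring
  have comb : ((n:ℝ)+2) * legF P ε (n+2) - legH P ε (n+2)
      = ((2*(n:ℝ)+3) * x * legF P ε (n+1) - 2*x*legH P ε (n+1))
        - (((n:ℝ)+1) * legF P ε n - legH P ε n) := by
    rw [X, Y, Z, ← Finset.sum_sub_distrib]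
    refine Finset.sum_congr rfl ?_
    intro i _
    ring
  linarith [comb]

theorem legendre_recurrence_error
    (x : ℝ) (p ptilde : ℤ → ℝ) (ε : ℕ → ℝ) (εbar : ℝ)
    (hp0 : p 0 = 1)
    (hprec : ∀ n : ℕ,
      ((n : ℝ) + 1) * p ((n : ℤ) + 1) = (2 * (n : ℝ) + 1) * x * p (n : ℤ) - (n : ℝ) * p ((n : ℤ) - 1))
    (hpbound : ∀ n : ℕ, |p (n : ℤ)| ≤ 1)
    (hq0 : ptilde 0 = 1)
    (hqrec : ∀ n : ℕ,
      ptilde ((n : ℤ) + 1)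
        = ((2 * (n : ℝ) + 1) * x * ptilde (n : ℤ) - (n : ℝ) * ptilde ((n : ℤ) - 1)) / ((n : ℝ) + 1)
          + ε n)
    (hε : ∀ n : ℕ, |ε n| ≤ εbar) :
    ∀ n : ℕ, |ptilde (n : ℤ) - p (n : ℤ)| ≤ ((n : ℝ) + 1) * ((n : ℝ) + 2) * εbar / 4 := by
  set P : ℕ → ℝ := fun n => p (n : ℤ) with hP
  set E : ℕ → ℝ := fun n => ptilde (n : ℤ) - p (n : ℤ) with hE
  have hεbar : 0 ≤ εbar := le_trans (abs_nonneg _) (hε 0)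
  have hP0 : P 0 = 1 := by simpa [hP] using hp0
  -- the ℕ-indexed recurrence for P
  have Prec : ∀ c : ℕ, ((c:ℝ)+1) * P (c+1) = (2*(c:ℝ)+1) * x * P c - (c:ℝ) * P (c-1) := by
    intro c
    have h := hprec c
    match c with
    | 0 =>
        simpa [hP] using h
    | Nat.succ m =>
        have h1 : ((Nat.succ m : ℕ) : ℤ) + 1 = ((m + 2 : ℕ) : ℤ) := by push_cast; ring
        have h2 : ((Nat.succ m : ℕ) : ℤ) - 1 = ((m : ℕ) : ℤ) := by push_cast; ring
        rw [h1, h2] at h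
        have h3 : (Nat.succ m) + 1 = m + 2 := rfl
        have h4 : (Nat.succ m) - 1 = m := rfl
        rw [h3, h4]
        simpa [hP] using h
  have hP1 : P 1 = x := by
    have h := Prec 0
    simp at h
    rw [hP0] at h
    simpa using h
  -- the ℕ-indexed recurrence for E
  have Erec : ∀ n : ℕ, ((n:ℝ)+1) * E (n+1)
      = (2*(n:ℝ)+1) * x * E n - (n:ℝ) * E (n-1) + ((n:ℝ)+1) * ε n := by
    intro n
    have hne : ((n:ℝ)+1) ≠ 0 := by positivity
    have hq := hqrec n
    have hp := hprec n
    have hq' : ((n:ℝ)+1) * ptilde ((n:ℤ)+1)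
        = (2*(n:ℝ)+1) * x * ptilde (n:ℤ) - (n:ℝ) * ptilde ((n:ℤ)-1) + ((n:ℝ)+1) * ε n := by
      rw [hq]; field_simp
    match n with
    | 0 =>
        have e0 : E 0 = 0 := by simp [hE, hq0, hp0]
        have h1 : ((0:ℕ):ℤ) + 1 = ((1:ℕ):ℤ) := by norm_num
        rw [h1] at hq' hp
        simp only [Nat.cast_zero] at hq' hp ⊢
        have : E 1 = ptilde ((1:ℕ):ℤ) - p ((1:ℕ):ℤ) := rfl
        rw [this]
        push_cast at hq' hp ⊢
        rw [e0]
        norm_num at hq' hp ⊢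
        rw [hq', hp, hq0, hp0]
        ring
    | Nat.succ m =>
        have h1 : ((Nat.succ m : ℕ) : ℤ) + 1 = ((m + 2 : ℕ) : ℤ) := by push_cast; ring
        have h2 : ((Nat.succ m : ℕ) : ℤ) - 1 = ((m : ℕ) : ℤ) := by push_cast; ring
        rw [h1, h2] at hq' hp
        have h4 : (Nat.succ m) - 1 = m := rfl
        rw [h4]
        have eE2 : E (Nat.succ m + 1) = ptilde ((m+2 : ℕ):ℤ) - p ((m+2 : ℕ):ℤ) := rfl
        have eE1 : E (Nat.succ m) = ptilde ((Nat.succ m : ℕ):ℤ) - p ((Nat.succ m : ℕ):ℤ) := rfl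
        have eE0 : E m = ptilde ((m : ℕ):ℤ) - p ((m : ℕ):ℤ) := rfl
        rw [eE2, eE1, eE0]
        push_cast at hq' hp ⊢
        linarith [hq', hp]
  -- base values of T
  have hT0 : legT P 0 = 1 := by
    unfold legT
    simp [hP0]
  have hT1 : legT P 1 = 2*x := by
    unfold legT
    rw [Finset.sum_range_succ, Finset.sum_range_one]
    norm_num [hP0, hP1]
    ring
  have hT := legT_rec P x Prec
  -- E = legF
  have main : ∀ n : ℕ, E n = legF P ε n ∧ E (n+1) = legF P ε (n+1) := by
    intro n
    induction n with
    | zero =>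
        constructor
        · have e0 : E 0 = 0 := by simp [hE, hq0, hp0]
          rw [e0]
          unfold legF
          simp
        · have h := Erec 0
          have e0 : E 0 = 0 := by simp [hE, hq0, hp0]
          rw [e0] at h
          norm_num at h
          rw [h]
          unfold legF legG
          simp [hP0]
    | succ n ih =>
        refine ⟨ih.2, ?_⟩
        have hE2 := Erec (n+1)
        have hF2 := legF_rec P ε x Prec n
        have hH2 := legH_rec P ε x hT hT0 hT1 n
        have hne : ((n:ℝ)+2) ≠ 0 := by positivity
        have hFtot : ((n:ℝ)+2) * legF P ε (n+2)
            = (2*(n:ℝ)+3) * x * legF P ε (n+1) - ((n:ℝ)+1) * legF P ε n + ((n:ℝ)+2) * ε (n+1) := by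
          rw [hF2]
          linarith [hH2]
        push_cast at hE2
        have hEtot : ((n:ℝ)+2) * E (n+2)
            = (2*(n:ℝ)+3) * x * E (n+1) - ((n:ℝ)+1) * E n + ((n:ℝ)+2) * ε (n+1) := by
          have : (n:ℝ) + 1 + 1 = (n:ℝ) + 2 := by ring
          rw [this] at hE2
          linarith [hE2]
        have : ((n:ℝ)+2) * E (n+2) = ((n:ℝ)+2) * legF P ε (n+2) := by
          rw [hEtot, hFtot, ih.1, ih.2]
        exact mul_left_cancel₀ hne this
  -- bounds
  have Gbound : ∀ j : ℕ, |legG P ε j| ≤ εbar * ((j:ℝ) * ((j:ℝ)+1) / 2) := by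
    intro j
    have sumId : (∑ k ∈ Finset.range j, ((k:ℝ)+1)) = (j:ℝ) * ((j:ℝ)+1) / 2 := by
      induction j with
      | zero => simp
      | succ m ihm =>
          rw [Finset.sum_range_succ, ihm]
          push_cast
          ring
    calc |legG P ε j| ≤ ∑ k ∈ Finset.range j, |((k:ℝ)+1) * ε k * P (j - 1 - k)| :=
          Finset.abs_sum_le_sum_abs _ _
      _ ≤ ∑ k ∈ Finset.range j, ((k:ℝ)+1) * εbar := by
          refine Finset.sum_le_sum ?_
          intro k _
          rw [abs_mul, abs_mul]
          have h1 : |((k:ℝ)+1)| = ((k:ℝ)+1) := abs_of_nonneg (by positivity)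
          rw [h1]
          have h2 : |ε k| * |P (j-1-k)| ≤ εbar * 1 := by
            apply mul_le_mul (hε k) (hpbound (j-1-k)) (abs_nonneg _) hεbar
          calc ((k:ℝ)+1) * |ε k| * |P (j-1-k)| = ((k:ℝ)+1) * (|ε k| * |P (j-1-k)|) := by ring
            _ ≤ ((k:ℝ)+1) * (εbar * 1) := by
                apply mul_le_mul_of_nonneg_left h2 (by positivity)
            _ = ((k:ℝ)+1) * εbar := by ring
      _ = (∑ k ∈ Finset.range j, ((k:ℝ)+1)) * εbar := by rw [Finset.sum_mul]
      _ = εbar * ((j:ℝ) * ((j:ℝ)+1) / 2) := by rw [sumId]; ring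
  have Fbound : ∀ n : ℕ, |legF P ε n| ≤ εbar * ((n:ℝ) * ((n:ℝ)+3) / 4) := by
    intro n
    have sumId2 : (∑ i ∈ Finset.range n, (((i:ℝ)+2)/2)) = (n:ℝ) * ((n:ℝ)+3) / 4 := by
      induction n with
      | zero => simp
      | succ m ihm =>
          rw [Finset.sum_range_succ, ihm]
          push_cast
          ring
    calc |legF P ε n| ≤ ∑ i ∈ Finset.range n, |(1/((i:ℝ)+1)) * legG P ε (i+1) * P (n-1-i)| :=
          Finset.abs_sum_le_sum_abs _ _
      _ ≤ ∑ i ∈ Finset.range n, εbar * (((i:ℝ)+2)/2) := by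
          refine Finset.sum_le_sum ?_
          intro i _
          rw [abs_mul, abs_mul]
          have h1 : |(1/((i:ℝ)+1))| = 1/((i:ℝ)+1) := abs_of_nonneg (by positivity)
          rw [h1]
          have hGi := Gbound (i+1)
          have hPi := hpbound (n-1-i)
          have hstep : (1/((i:ℝ)+1)) * |legG P ε (i+1)| * |P (n-1-i)|
              ≤ (1/((i:ℝ)+1)) * (εbar * (((i+1:ℕ):ℝ) * (((i+1:ℕ):ℝ)+1) / 2)) * 1 := by
            apply mul_le_mul _ hPi (abs_nonneg _)
            · positivity
            · apply mul_le_mul_of_nonneg_left hGi (by positivity)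
          calc (1/((i:ℝ)+1)) * |legG P ε (i+1)| * |P (n-1-i)|
              ≤ (1/((i:ℝ)+1)) * (εbar * (((i+1:ℕ):ℝ) * (((i+1:ℕ):ℝ)+1) / 2)) * 1 := hstep
            _ = εbar * (((i:ℝ)+2)/2) := by
                push_cast
                have : ((i:ℝ)+1) ≠ 0 := by positivity
                field_simp
                ring
      _ = εbar * ((n:ℝ) * ((n:ℝ)+3) / 4) := by
          rw [← Finset.mul_sum, sumId2]
  intro n
  have hEn : ptilde (n:ℤ) - p (n:ℤ) = legF P ε n := (main n).1
  rw [hEn]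
  calc |legF P ε n| ≤ εbar * ((n:ℝ) * ((n:ℝ)+3) / 4) := Fbound n
    _ ≤ ((n:ℝ)+1) * ((n:ℝ)+2) * εbar / 4 := by nlinarith [hεbar, Nat.cast_nonneg (α := ℝ) n]
end

section
/- Let n ≥ 1 and 0 < a ≤ 1. Let (Δ_i^k) and (δ_i^k), for i ∈ ℤ and k ∈ ℕ, be real doubly-indexed sequences that are 2n-periodic in i (Δ_{i+2n}^k = Δ_i^k, δ_{i+2n}^k = δ_i^k) and odd in i (Δ_{−i}^k = −Δ_i^k, δ_{−i}^k = −δ_i^k), satisfying Δ_i^0 = δ_i^0, Δ_i^1 = δ_i^1, and Δ_i^{k+1} = 2Δ_i^k − Δ_i^{k−1} + a(Δ_{i+1}^k − 2Δ_i^k + Δ_{i−1}^k) + δ_i^{k+1} for all i and all k ≥ 1. Assume there are constants δ̄⁰, δ̄¹, δ̄ ≥ 0 with δ̄⁰ ≤ δ̄ and δ̄¹ + 2δ̄⁰ ≤ δ̄ such that |δ_i^0| ≤ δ̄⁰, |δ_i^1| ≤ δ̄¹, and |δ_i^k| ≤ δ̄ for all i and all k ≥ 2. Then for every k, the root mean square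 error satisfies ((1/n)·Σ_{i=0}^{n−1} (Δ_i^k)²)^{1/2} ≤ (k+1)(k+2)·δ̄/2. -/
/-!
STATEMENT 14: root mean square bound on the accumulated error of the finite
difference scheme for the 1D wave equation:
`((1/n)·Σ_{i<n} (Δ_i^k)²)^{1/2} ≤ (k+1)(k+2)·δ̄/2`.
-/


open Finset

namespace WaveAux

noncomputable def inn (m : ℕ) (x y : ℤ → ℝ) : ℝ := ∑ i ∈ Finset.range m, x i * y i

noncomputable def nrm (m : ℕ) (x : ℤ → ℝ) : ℝ := Real.sqrt (inn m x x)

def Per (m : ℕ) (x : ℤ → ℝ) : Prop := ∀ i : ℤ, x (i + (m : ℤ)) = x i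

noncomputable def Mop (a : ℝ) (x : ℤ → ℝ) : ℤ → ℝ :=
  fun i => (1 - a) * x i + a / 2 * (x (i + 1) + x (i - 1))

noncomputable def evol (a : ℝ) (p q : ℤ → ℝ) : ℕ → ℤ → ℝ
  | 0 => p
  | 1 => q
  | (m + 2) => fun i => 2 * Mop a (evol a p q (m + 1)) i - evol a p q m i

lemma evol_zero (a : ℝ) (p q : ℤ → ℝ) : evol a p q 0 = p := rfl
lemma evol_one (a : ℝ) (p q : ℤ → ℝ) : evol a p q 1 = q := rfl
lemma evol_two (a : ℝ) (p q : ℤ → ℝ) (m : ℕ) (i : ℤ) :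
    evol a p q (m + 2) i = 2 * Mop a (evol a p q (m + 1)) i - evol a p q m i := rfl

lemma inn_self_nonneg (m : ℕ) (x : ℤ → ℝ) : 0 ≤ inn m x x :=
  Finset.sum_nonneg fun i _ => mul_self_nonneg _

lemma nrm_nonneg (m : ℕ) (x : ℤ → ℝ) : 0 ≤ nrm m x := Real.sqrt_nonneg _

lemma nrm_sq (m : ℕ) (x : ℤ → ℝ) : nrm m x ^ 2 = inn m x x :=
  Real.sq_sqrt (inn_self_nonneg m x)

lemma inn_comm (m : ℕ) (x y : ℤ → ℝ) : inn m x y = inn m y x := by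
  unfold inn; exact Finset.sum_congr rfl fun i _ => mul_comm _ _

lemma cs (m : ℕ) (x y : ℤ → ℝ) : inn m x y ≤ nrm m x * nrm m y := by
  have h := Finset.sum_mul_sq_le_sq_mul_sq (Finset.range m)
    (fun i : ℕ => x i) (fun i : ℕ => y i)
  have hx : ∑ i ∈ Finset.range m, (x i) ^ 2 = inn m x x := by
    unfold inn; exact Finset.sum_congr rfl fun i _ => sq (x i) ▸ (sq (x (i:ℤ))).symm ▸ by ring
  have hy : ∑ i ∈ Finset.range m, (y i) ^ 2 = inn m y y := by
    unfold inn; exact Finset.sum_congr rfl fun i _ => by ring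
  rw [hx, hy] at h
  calc inn m x y ≤ |inn m x y| := le_abs_self _
    _ = Real.sqrt ((inn m x y) ^ 2) := (Real.sqrt_sq_eq_abs _).symm
    _ ≤ Real.sqrt (inn m x x * inn m y y) := Real.sqrt_le_sqrt h
    _ = nrm m x * nrm m y := by
        rw [Real.sqrt_mul (inn_self_nonneg m x)]; rfl

lemma sum_shift {m : ℕ} {f : ℤ → ℝ} (hf : Per m f) :
    ∑ i ∈ Finset.range m, f ((i : ℤ) + 1) = ∑ i ∈ Finset.range m, f (i : ℤ) := by
  have h1 := Finset.sum_range_succ' (fun j : ℕ => f (j : ℤ)) m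
  have h2 := Finset.sum_range_succ (fun j : ℕ => f (j : ℤ)) m
  have h4 : f ((m : ℕ) : ℤ) = f 0 := by have := hf 0; simpa using this
  push_cast at h1
  rw [h2] at h1
  rw [h4] at h1
  linarith
lemma per_sub1 {m : ℕ} {f : ℤ → ℝ} (hf : Per m f) : Per m (fun i => f (i - 1)) := by
  intro i
  show f (i + (m : ℤ) - 1) = f (i - 1)
  rw [show i + (m : ℤ) - 1 = (i - 1) + (m : ℤ) by ring, hf]

lemma per_add1 {m : ℕ} {f : ℤ → ℝ} (hf : Per m f) : Per m (fun i => f (i + 1)) := by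
  intro i
  show f (i + (m : ℤ) + 1) = f (i + 1)
  rw [show i + (m : ℤ) + 1 = (i + 1) + (m : ℤ) by ring, hf]

lemma per_mul {m : ℕ} {f g : ℤ → ℝ} (hf : Per m f) (hg : Per m g) :
    Per m (fun i => f i * g i) := by
  intro i; show f (i + m) * g (i + m) = f i * g i; rw [hf, hg]

lemma sum_shift' {m : ℕ} {f : ℤ → ℝ} (hf : Per m f) :
    ∑ i ∈ Finset.range m, f ((i : ℤ) - 1) = ∑ i ∈ Finset.range m, f (i : ℤ) := by
  have h := sum_shift (per_sub1 hf)
  simp only [add_sub_cancel_right] at h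
  exact h.symm

lemma sq_shift {m : ℕ} {x : ℤ → ℝ} (hx : Per m x) :
    ∑ i ∈ Finset.range m, x ((i : ℤ) + 1) * x ((i : ℤ) + 1)
      = ∑ i ∈ Finset.range m, x (i : ℤ) * x (i : ℤ) :=
  sum_shift (f := fun i => x i * x i) (per_mul hx hx)

lemma sq_shift' {m : ℕ} {x : ℤ → ℝ} (hx : Per m x) :
    ∑ i ∈ Finset.range m, x ((i : ℤ) - 1) * x ((i : ℤ) - 1)
      = ∑ i ∈ Finset.range m, x (i : ℤ) * x (i : ℤ) :=
  sum_shift' (f := fun i => x i * x i) (per_mul hx hx)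

/-- Cauchy–Schwarz for the shifted sequence. -/
lemma cs_shift {m : ℕ} {x y : ℤ → ℝ} (hx : Per m x) :
    ∑ i ∈ Finset.range m, x ((i : ℤ) + 1) * y (i : ℤ) ≤ nrm m x * nrm m y := by
  have h := cs m (fun i => x (i + 1)) y
  have hn : nrm m (fun i => x (i + 1)) = nrm m x := by
    unfold nrm inn
    congr 1
    exact sq_shift hx
  rw [hn] at h
  exact h

lemma cs_shift' {m : ℕ} {x y : ℤ → ℝ} (hx : Per m x) :
    ∑ i ∈ Finset.range m, x ((i : ℤ) - 1) * y (i : ℤ) ≤ nrm m x * nrm m y := by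
  have h := cs m (fun i => x (i - 1)) y
  have hn : nrm m (fun i => x (i - 1)) = nrm m x := by
    unfold nrm inn
    congr 1
    exact sq_shift' hx
  rw [hn] at h
  exact h

lemma inn_Mop_expand (m : ℕ) (a : ℝ) (x y : ℤ → ℝ) :
    inn m (Mop a x) y
      = (1 - a) * inn m x y
        + a / 2 * (∑ i ∈ Finset.range m, x ((i : ℤ) + 1) * y (i : ℤ))
        + a / 2 * (∑ i ∈ Finset.range m, x ((i : ℤ) - 1) * y (i : ℤ)) := by
  unfold inn Mop
  rw [Finset.mul_sum, Finset.mul_sum, Finset.mul_sum, ← Finset.sum_add_distrib,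
    ← Finset.sum_add_distrib]
  exact Finset.sum_congr rfl fun i _ => by ring

lemma inn_Mop_expand' (m : ℕ) (a : ℝ) (x y : ℤ → ℝ) :
    inn m x (Mop a y)
      = (1 - a) * inn m x y
        + a / 2 * (∑ i ∈ Finset.range m, x (i : ℤ) * y ((i : ℤ) + 1))
        + a / 2 * (∑ i ∈ Finset.range m, x (i : ℤ) * y ((i : ℤ) - 1)) := by
  unfold inn Mop
  rw [Finset.mul_sum, Finset.mul_sum, Finset.mul_sum, ← Finset.sum_add_distrib,
    ← Finset.sum_add_distrib]
  exact Finset.sum_congr rfl fun i _ => by ring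

/-- ‖M‖ ≤ 1 : the key CFL bound. -/
lemma boundA {m : ℕ} {a : ℝ} (ha0 : 0 ≤ a) (ha1 : a ≤ 1) {x y : ℤ → ℝ}
    (hx : Per m x) : inn m (Mop a x) y ≤ nrm m x * nrm m y := by
  rw [inn_Mop_expand]
  have h1 : inn m x y ≤ nrm m x * nrm m y := cs m x y
  have h2 := cs_shift (y := y) hx
  have h3 := cs_shift' (y := y) hx
  nlinarith [nrm_nonneg m x, nrm_nonneg m y]

/-- symmetry of `Mop` with respect to the inner product. -/
lemma symmM {m : ℕ} {a : ℝ} {x y : ℤ → ℝ} (hx : Per m x) (hy : Per m y) :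
    inn m (Mop a x) y = inn m x (Mop a y) := by
  have e1 : ∑ i ∈ Finset.range m, x ((i : ℤ) + 1) * y (i : ℤ)
      = ∑ i ∈ Finset.range m, x (i : ℤ) * y ((i : ℤ) - 1) := by
    have h := sum_shift' (f := fun i => x (i + 1) * y i) (per_mul (per_add1 hx) hy)
    simp only [sub_add_cancel] at h
    exact h.symm
  have e2 : ∑ i ∈ Finset.range m, x ((i : ℤ) - 1) * y (i : ℤ)
      = ∑ i ∈ Finset.range m, x (i : ℤ) * y ((i : ℤ) + 1) := by
    have h := sum_shift (f := fun i => x (i - 1) * y i) (per_mul (per_sub1 hx) hy)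
    simp only [add_sub_cancel_right] at h
    exact h.symm
  rw [inn_Mop_expand, inn_Mop_expand', e1, e2]
  ring
lemma per_Mop {m : ℕ} {a : ℝ} {x : ℤ → ℝ} (hx : Per m x) : Per m (Mop a x) := by
  intro i
  unfold Mop
  rw [hx i, show i + (m : ℤ) + 1 = (i + 1) + (m : ℤ) by ring, hx (i + 1),
    show i + (m : ℤ) - 1 = (i - 1) + (m : ℤ) by ring, hx (i - 1)]

lemma per_evol {m : ℕ} {a : ℝ} {p q : ℤ → ℝ} (hp : Per m p) (hq : Per m q) :
    ∀ k, Per m (evol a p q k) := by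
  intro k
  induction k using Nat.twoStepInduction with
  | zero => exact hp
  | one => exact hq
  | more k ih1 ih2 =>
    intro i
    rw [evol_two, evol_two]
    rw [per_Mop ih2 i, ih1 i]

/-- inner product with an average. -/
lemma inn_avg (m : ℕ) (x y z : ℤ → ℝ) :
    inn m x (fun i => (y i + z i) / 2) = (inn m x y + inn m x z) / 2 := by
  unfold inn
  rw [eq_div_iff (by norm_num : (2:ℝ) ≠ 0), Finset.sum_mul, ← Finset.sum_add_distrib]
  exact Finset.sum_congr rfl fun i _ => by ring

lemma inn_avg_left (m : ℕ) (x y z : ℤ → ℝ) :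
    inn m (fun i => (y i + z i) / 2) x = (inn m y x + inn m z x) / 2 := by
  rw [inn_comm, inn_avg, inn_comm m x y, inn_comm m x z]

lemma inn_zero_right (m : ℕ) (x : ℤ → ℝ) : inn m x (fun _ => 0) = 0 := by
  unfold inn; simp

lemma inn_zero_left (m : ℕ) (x : ℤ → ℝ) : inn m (fun _ => 0) x = 0 := by
  unfold inn; simp

/-- Energy conservation for the homogeneous scheme started from `(0, q)`. -/
lemma energy {m : ℕ} {a : ℝ} {q : ℤ → ℝ} (hq : Per m q) (k : ℕ) :
    inn m (evol a (fun _ => 0) q (k + 1)) (evol a (fun _ => 0) q (k + 1))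
      + inn m (evol a (fun _ => 0) q k) (evol a (fun _ => 0) q k)
      - 2 * inn m (Mop a (evol a (fun _ => 0) q (k + 1))) (evol a (fun _ => 0) q k)
    = inn m q q := by
  set z : ℤ → ℝ := fun _ => 0 with hz
  have hperz : Per m z := fun i => rfl
  have hper : ∀ j, Per m (evol a z q j) := per_evol hperz hq
  induction k with
  | zero =>
    rw [evol_zero, evol_one, inn_zero_right, inn_zero_right]
    ring
  | succ k ih =>
    set v0 := evol a z q k with hv0
    set v1 := evol a z q (k + 1) with hv1
    set v2 := evol a z q (k + 2) with hv2
    have hM : Mop a v1 = fun i => (v2 i + v0 i) / 2 := by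
      funext i
      have h := evol_two a z q k i
      rw [← hv0, ← hv1, ← hv2] at h
      linarith
    have t1 : inn m (Mop a v2) v1 = (inn m v2 v2 + inn m v2 v0) / 2 := by
      rw [symmM (hper (k + 2)) (hper (k + 1)), hM, inn_avg]
    have t2 : inn m (Mop a v1) v0 = (inn m v2 v0 + inn m v0 v0) / 2 := by
      rw [hM, inn_avg_left]
    rw [t2] at ih
    rw [t1]
    linarith

/-- one-step growth of the norm for the homogeneous scheme. -/
lemma grow_step {m : ℕ} {a : ℝ} (ha0 : 0 ≤ a) (ha1 : a ≤ 1) {q : ℤ → ℝ}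
    (hq : Per m q) (k : ℕ) :
    nrm m (evol a (fun _ => 0) q (k + 1)) ≤ nrm m (evol a (fun _ => 0) q k) + nrm m q := by
  set z : ℤ → ℝ := fun _ => 0
  have hper : ∀ j, Per m (evol a z q j) := per_evol (fun i => rfl) hq
  have hE := energy (a := a) hq k
  set A := nrm m (evol a z q (k + 1)) with hA
  set B := nrm m (evol a z q k) with hB
  set C := nrm m q with hC
  have hA2 : A ^ 2 = inn m (evol a z q (k + 1)) (evol a z q (k + 1)) := nrm_sq m _
  have hB2 : B ^ 2 = inn m (evol a z q k) (evol a z q k) := nrm_sq m _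
  have hC2 : C ^ 2 = inn m q q := nrm_sq m _
  have hcs : inn m (Mop a (evol a z q (k + 1))) (evol a z q k) ≤ A * B :=
    boundA ha0 ha1 (hper (k + 1))
  have hAn : 0 ≤ A := nrm_nonneg m _
  have hBn : 0 ≤ B := nrm_nonneg m _
  have hCn : 0 ≤ C := nrm_nonneg m _
  nlinarith [sq_nonneg (A - B - C), sq_nonneg (A - B + C)]

lemma grow {m : ℕ} {a : ℝ} (ha0 : 0 ≤ a) (ha1 : a ≤ 1) {q : ℤ → ℝ}
    (hq : Per m q) : ∀ k, nrm m (evol a (fun _ => 0) q k) ≤ (k : ℝ) * nrm m q := by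
  intro k
  induction k with
  | zero =>
    rw [evol_zero]
    unfold nrm
    rw [inn_zero_left]
    simp
  | succ k ih =>
    have h := grow_step ha0 ha1 hq k
    have := nrm_nonneg m q
    push_cast
    linarith

/-- triangle inequality. -/
lemma nrm_add_le (m : ℕ) (x y : ℤ → ℝ) :
    nrm m (fun i => x i + y i) ≤ nrm m x + nrm m y := by
  have hexp : inn m (fun i => x i + y i) (fun i => x i + y i)
      = inn m x x + 2 * inn m x y + inn m y y := by
    unfold inn
    rw [Finset.mul_sum, ← Finset.sum_add_distrib, ← Finset.sum_add_distrib]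
    exact Finset.sum_congr rfl fun i _ => by ring
  have hcs := cs m x y
  have hxn := nrm_nonneg m x
  have hyn := nrm_nonneg m y
  have hx2 := nrm_sq m x
  have hy2 := nrm_sq m y
  unfold nrm
  rw [hexp]
  have : inn m x x + 2 * inn m x y + inn m y y ≤ (nrm m x + nrm m y) ^ 2 := by
    nlinarith
  calc Real.sqrt (inn m x x + 2 * inn m x y + inn m y y)
      ≤ Real.sqrt ((nrm m x + nrm m y) ^ 2) := Real.sqrt_le_sqrt this
    _ = nrm m x + nrm m y := by
        rw [Real.sqrt_sq (by linarith)]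

lemma nrm_sum_le (m : ℕ) (s : Finset ℕ) (F : ℕ → ℤ → ℝ) :
    nrm m (fun i => ∑ j ∈ s, F j i) ≤ ∑ j ∈ s, nrm m (F j) := by
  classical
  induction s using Finset.induction_on with
  | empty =>
    simp only [Finset.sum_empty]
    unfold nrm
    rw [inn_zero_left]
    simp
  | insert _ _ hnotmem ih =>
    rename_i j s
    rw [Finset.sum_insert hnotmem]
    calc nrm m (fun i => ∑ t ∈ insert j s, F t i)
        = nrm m (fun i => F j i + ∑ t ∈ s, F t i) := by
          congr 1; funext i; rw [Finset.sum_insert hnotmem]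
      _ ≤ nrm m (F j) + nrm m (fun i => ∑ t ∈ s, F t i) := nrm_add_le m _ _
      _ ≤ nrm m (F j) + ∑ t ∈ s, nrm m (F t) := by linarith

lemma nrm_le_of_bound {m : ℕ} {x : ℤ → ℝ} {c : ℝ} (hc : 0 ≤ c)
    (h : ∀ i : ℤ, |x i| ≤ c) : nrm m x ≤ Real.sqrt m * c := by
  have hle : inn m x x ≤ (m : ℝ) * c ^ 2 := by
    unfold inn
    calc ∑ i ∈ Finset.range m, x i * x i ≤ ∑ _i ∈ Finset.range m, c ^ 2 := by
          apply Finset.sum_le_sum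
          intro i _
          have := h (i : ℤ)
          nlinarith [abs_nonneg (x (i : ℤ)), le_abs_self (x (i:ℤ)), neg_abs_le (x (i:ℤ))]
      _ = (m : ℝ) * c ^ 2 := by rw [Finset.sum_const, Finset.card_range]; ring
  unfold nrm
  calc Real.sqrt (inn m x x) ≤ Real.sqrt ((m : ℝ) * c ^ 2) := Real.sqrt_le_sqrt hle
    _ = Real.sqrt m * c := by
        rw [Real.sqrt_mul (Nat.cast_nonneg m), Real.sqrt_sq hc]

lemma nrm_neg (m : ℕ) (x : ℤ → ℝ) : nrm m (fun i => -x i) = nrm m x := by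
  unfold nrm inn
  congr 1
  exact Finset.sum_congr rfl fun i _ => by ring
lemma Mop_add_pt (a : ℝ) (x y : ℤ → ℝ) (i : ℤ) :
    Mop a (fun t => x t + y t) i = Mop a x i + Mop a y i := by
  unfold Mop; ring

lemma Mop_sum_pt (a : ℝ) (s : Finset ℕ) (F : ℕ → ℤ → ℝ) (i : ℤ) :
    Mop a (fun t => ∑ j ∈ s, F j t) i = ∑ j ∈ s, Mop a (F j) i := by
  unfold Mop
  show (1 - a) * (∑ j ∈ s, F j i) + a / 2 * ((∑ j ∈ s, F j (i + 1)) + (∑ j ∈ s, F j (i - 1)))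
      = ∑ j ∈ s, ((1 - a) * F j i + a / 2 * (F j (i + 1) + F j (i - 1)))
  rw [Finset.sum_add_distrib, ← Finset.mul_sum, ← Finset.mul_sum, Finset.sum_add_distrib]

/-- splitting of initial data. -/
lemma evol_split (a : ℝ) (p q : ℤ → ℝ) :
    ∀ k i, evol a p q k i
      = evol a p (fun _ => 0) k i + evol a (fun _ => 0) q k i := by
  intro k
  induction k using Nat.twoStepInduction with
  | zero => intro i; simp [evol_zero]
  | one => intro i; simp [evol_one]
  | more k ih1 ih2 =>
    intro i
    have hfun : evol a p q (k + 1) = fun t =>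
        evol a p (fun _ => 0) (k + 1) t + evol a (fun _ => 0) q (k + 1) t :=
      funext fun t => ih2 t
    rw [evol_two, evol_two, evol_two, hfun, Mop_add_pt, ih1 i]
    ring

/-- a solution started from `(p, 0)` is, shifted by one step, one started from `(0, -p)`. -/
lemma evol_delay (a : ℝ) (p : ℤ → ℝ) :
    ∀ k i, evol a p (fun _ => 0) (k + 1) i = evol a (fun _ => 0) (fun t => -p t) k i := by
  intro k
  induction k using Nat.twoStepInduction with
  | zero => intro i; rfl
  | one =>
    intro i
    rw [evol_two, evol_one, evol_zero, evol_one]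
    unfold Mop
    norm_num
  | more k ih1 ih2 =>
    intro i
    have hfun : evol a p (fun _ => 0) (k + 2) = evol a (fun _ => 0) (fun t => -p t) (k + 1) :=
      funext fun t => ih2 t
    rw [show k + 2 + 1 = (k + 1) + 2 by ring, evol_two, evol_two, hfun, ih1 i]

/-- Duhamel representation of the inhomogeneous scheme. -/
lemma duhamel {a : ℝ} {u f : ℕ → ℤ → ℝ}
    (h0 : ∀ i, u 0 i = f 0 i) (h1 : ∀ i, u 1 i = f 1 i)
    (hrec : ∀ k i, u (k + 2) i = 2 * Mop a (u (k + 1)) i - u k i + f (k + 2) i) :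
    ∀ k i, u k i = evol a (f 0) (f 1) k i
      + ∑ j ∈ Finset.Icc 2 k, evol a (fun _ => 0) (f j) (k + 1 - j) i := by
  intro k
  induction k using Nat.twoStepInduction with
  | zero =>
    intro i
    rw [show Finset.Icc 2 0 = (∅ : Finset ℕ) by rfl]
    simpa [evol_zero] using h0 i
  | one =>
    intro i
    rw [show Finset.Icc 2 1 = (∅ : Finset ℕ) by rfl]
    simpa [evol_one] using h1 i
  | more k ih1 ih2 =>
    intro i
    set z : ℤ → ℝ := fun _ => 0 with hz
    -- rewrite u (k+1) as a function
    have hu1 : u (k + 1) = fun t => evol a (f 0) (f 1) (k + 1) t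
        + ∑ j ∈ Finset.Icc 2 (k + 1), evol a z (f j) (k + 2 - j) t := by
      funext t
      rw [ih2 t]
    have hMop : Mop a (u (k + 1)) i
        = Mop a (evol a (f 0) (f 1) (k + 1)) i
          + ∑ j ∈ Finset.Icc 2 (k + 1), Mop a (evol a z (f j) (k + 2 - j)) i := by
      rw [hu1]
      rw [show (fun t => evol a (f 0) (f 1) (k + 1) t
          + ∑ j ∈ Finset.Icc 2 (k + 1), evol a z (f j) (k + 2 - j) t)
        = (fun t => evol a (f 0) (f 1) (k + 1) t
          + (fun t' => ∑ j ∈ Finset.Icc 2 (k + 1), evol a z (f j) (k + 2 - j) t') t) from rfl]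
      rw [Mop_add_pt, Mop_sum_pt]
    -- expand the target sum
    have hsplit : ∑ j ∈ Finset.Icc 2 (k + 2), evol a z (f j) (k + 2 + 1 - j) i
        = ∑ j ∈ Finset.Icc 2 (k + 1), evol a z (f j) (k + 2 + 1 - j) i + f (k + 2) i := by
      rw [show k + 2 = (k + 1) + 1 from rfl,
        Finset.sum_Icc_succ_top (by omega : 2 ≤ (k + 1) + 1)]
      congr 1
      rw [show k + 1 + 1 + 1 - (k + 1 + 1) = 1 by omega, evol_one]
    have hstep : ∑ j ∈ Finset.Icc 2 (k + 1), evol a z (f j) (k + 2 + 1 - j) i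
        = 2 * (∑ j ∈ Finset.Icc 2 (k + 1), Mop a (evol a z (f j) (k + 2 - j)) i)
          - ∑ j ∈ Finset.Icc 2 (k + 1), evol a z (f j) (k + 1 - j) i := by
      rw [Finset.mul_sum, ← Finset.sum_sub_distrib]
      apply Finset.sum_congr rfl
      intro j hj
      have hj2 : 2 ≤ j := (Finset.mem_Icc.mp hj).1
      have hjk : j ≤ k + 1 := (Finset.mem_Icc.mp hj).2
      rw [show k + 2 + 1 - j = (k + 1 - j) + 2 by omega, evol_two,
        show k + 1 - j + 1 = k + 2 - j by omega]
    have hdrop : ∑ j ∈ Finset.Icc 2 (k + 1), evol a z (f j) (k + 1 - j) i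
        = ∑ j ∈ Finset.Icc 2 k, evol a z (f j) (k + 1 - j) i := by
      rcases Nat.eq_zero_or_pos k with hk | hk
      · subst hk; rfl
      · obtain ⟨k', rfl⟩ := Nat.exists_eq_add_of_le hk
        rw [Finset.sum_Icc_succ_top (by omega : 2 ≤ 1 + k' + 1)]
        rw [show 1 + k' + 1 - (1 + k' + 1) = 0 by omega, evol_zero]
        simp [hz]
    rw [hrec k i, hMop, ih1 i, evol_two, hsplit, hstep, hdrop]
    ring
lemma sum_weights_le (k : ℕ) :
    ∑ j ∈ Finset.Icc 2 k, ((k + 1 - j : ℕ) : ℝ) ≤ (k : ℝ) * ((k : ℝ) - 1) / 2 := by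
  induction k with
  | zero => norm_num [show Finset.Icc 2 0 = (∅ : Finset ℕ) from rfl]
  | succ k ih =>
    rcases Nat.eq_zero_or_pos k with hk | hk
    · subst hk
      norm_num [show Finset.Icc 2 1 = (∅ : Finset ℕ) from rfl]
    · have hk1 : (1 : ℝ) ≤ (k : ℝ) := by exact_mod_cast hk
      rw [Finset.sum_Icc_succ_top (by omega : 2 ≤ k + 1)]
      have hcongr : ∑ j ∈ Finset.Icc 2 k, ((k + 1 + 1 - j : ℕ) : ℝ)
          = ∑ j ∈ Finset.Icc 2 k, (((k + 1 - j : ℕ) : ℝ) + 1) := by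
        apply Finset.sum_congr rfl
        intro j hj
        have hj2 := (Finset.mem_Icc.mp hj).2
        have : (k + 1 + 1 - j) = (k + 1 - j) + 1 := by omega
        rw [this]
        push_cast
        ring
      rw [hcongr, Finset.sum_add_distrib, Finset.sum_const, Nat.card_Icc]
      have hcard : ((k + 1 - 2 : ℕ) : ℝ) = (k : ℝ) - 1 := by
        have : (k + 1 - 2) = k - 1 := by omega
        rw [this]
        push_cast [Nat.cast_sub hk]
        ring
      have hlast : ((k + 1 + 1 - (k + 1) : ℕ) : ℝ) = 1 := by norm_num
      rw [hlast]
      simp only [nsmul_eq_mul, mul_one]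
      rw [hcard]
      push_cast
      nlinarith

lemma double_sum (n : ℕ) (x : ℤ → ℝ) (hper : ∀ i : ℤ, x (i + 2 * (n : ℤ)) = x i)
    (hodd : ∀ i : ℤ, x (-i) = - x i) :
    inn (2 * n) x x = 2 * ∑ i ∈ Finset.range n, x (i : ℤ) ^ 2 := by
  have hx0 : x 0 = 0 := by have := hodd 0; norm_num at this; linarith
  have hxn : x (n : ℤ) = 0 := by
    have h1 := hodd (n : ℤ)
    have h2 := hper (-(n : ℤ))
    rw [show -(n : ℤ) + 2 * (n : ℤ) = (n : ℤ) by ring] at h2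
    linarith
  unfold inn
  have hsplit : ∑ i ∈ Finset.range (2 * n), x (i : ℤ) * x (i : ℤ)
      = ∑ i ∈ Finset.range n, x (i : ℤ) * x (i : ℤ)
        + ∑ i ∈ Finset.range n, x ((n : ℤ) + i) * x ((n : ℤ) + i) := by
    rw [Finset.range_eq_Ico,
      ← Finset.sum_Ico_consecutive (fun j : ℕ => x (j : ℤ) * x (j : ℤ))
        (by omega : 0 ≤ n) (by omega : n ≤ 2 * n), ← Finset.range_eq_Ico]
    congr 1
    rw [Finset.sum_Ico_eq_sum_range]
    rw [show 2 * n - n = n by omega]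
    apply Finset.sum_congr rfl
    intro i _
    push_cast
    ring_nf
  have hterm : ∑ i ∈ Finset.range n, x ((n : ℤ) + i) * x ((n : ℤ) + i)
      = ∑ i ∈ Finset.range n, x ((n : ℤ) - i) * x ((n : ℤ) - i) := by
    apply Finset.sum_congr rfl
    intro i _
    have h2 := hper ((i : ℤ) - n)
    rw [show (i : ℤ) - n + 2 * (n : ℤ) = (n : ℤ) + i by ring] at h2
    have h3 := hodd ((n : ℤ) - i)
    rw [show -((n : ℤ) - i) = (i : ℤ) - n by ring] at h3
    rw [h2, h3]
    ring
  have hrefl : ∑ i ∈ Finset.range n, x ((n : ℤ) - i) * x ((n : ℤ) - i)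
      = ∑ i ∈ Finset.range n, x ((i : ℤ) + 1) * x ((i : ℤ) + 1) := by
    have h := Finset.sum_range_reflect (fun j : ℕ => x ((j : ℤ) + 1) * x ((j : ℤ) + 1)) n
    rw [← h]
    apply Finset.sum_congr rfl
    intro i hi
    have hi' : i < n := Finset.mem_range.mp hi
    have hc : (n : ℤ) - i = ((n - 1 - i : ℕ) : ℤ) + 1 := by omega
    rw [hc]
  have hshift : ∑ i ∈ Finset.range n, x ((i : ℤ) + 1) * x ((i : ℤ) + 1)
      = ∑ i ∈ Finset.range n, x (i : ℤ) * x (i : ℤ) := by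
    have h1 : ∑ i ∈ Finset.range (n + 1), x (i : ℤ) * x (i : ℤ)
        = ∑ i ∈ Finset.range n, x ((i : ℤ) + 1) * x ((i : ℤ) + 1) + x 0 * x 0 := by
      have h := Finset.sum_range_succ' (fun j : ℕ => x (j : ℤ) * x (j : ℤ)) n
      push_cast at h
      convert h using 2
    have h2 : ∑ i ∈ Finset.range (n + 1), x (i : ℤ) * x (i : ℤ)
        = ∑ i ∈ Finset.range n, x (i : ℤ) * x (i : ℤ) + x (n : ℤ) * x (n : ℤ) :=
      Finset.sum_range_succ _ n
    rw [h2, hxn, hx0] at h1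
    linarith
  rw [hsplit, hterm, hrefl, hshift]
  have : ∑ i ∈ Finset.range n, x (i : ℤ) * x (i : ℤ)
      = ∑ i ∈ Finset.range n, x (i : ℤ) ^ 2 :=
    Finset.sum_congr rfl fun i _ => by ring
  rw [this]
  ring

end WaveAux

open Finset WaveAux

theorem wave_error_rms_bound
    (n : ℕ) (hn : 1 ≤ n) (a : ℝ) (ha0 : 0 < a) (ha1 : a ≤ 1)
    (Δ δ : ℤ → ℕ → ℝ)
    (hΔper : ∀ (i : ℤ) (k : ℕ), Δ (i + 2 * (n : ℤ)) k = Δ i k)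
    (hδper : ∀ (i : ℤ) (k : ℕ), δ (i + 2 * (n : ℤ)) k = δ i k)
    (hΔodd : ∀ (i : ℤ) (k : ℕ), Δ (-i) k = -Δ i k)
    (hδodd : ∀ (i : ℤ) (k : ℕ), δ (-i) k = -δ i k)
    (h0 : ∀ i : ℤ, Δ i 0 = δ i 0)
    (h1 : ∀ i : ℤ, Δ i 1 = δ i 1)
    (hrec : ∀ (i : ℤ) (k : ℕ), 1 ≤ k →
      Δ i (k + 1) = 2 * Δ i k - Δ i (k - 1)
        + a * (Δ (i + 1) k - 2 * Δ i k + Δ (i - 1) k) + δ i (k + 1))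
    (d0 d1 d : ℝ) (hd0 : 0 ≤ d0) (hd1 : 0 ≤ d1) (hd : 0 ≤ d)
    (hc1 : d0 ≤ d) (hc2 : d1 + 2 * d0 ≤ d)
    (hb0 : ∀ i : ℤ, |δ i 0| ≤ d0)
    (hb1 : ∀ i : ℤ, |δ i 1| ≤ d1)
    (hbk : ∀ (i : ℤ) (k : ℕ), 2 ≤ k → |δ i k| ≤ d) :
    ∀ k : ℕ,
      Real.sqrt ((1 / (n : ℝ)) * ∑ i ∈ Finset.range n, (Δ (i : ℤ) k) ^ 2)
        ≤ ((k : ℝ) + 1) * ((k : ℝ) + 2) * d / 2 := by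
  intro k
  have ha0' : (0 : ℝ) ≤ a := le_of_lt ha0
  set m : ℕ := 2 * n with hm
  set u : ℕ → ℤ → ℝ := fun k i => Δ i k with hu
  set f : ℕ → ℤ → ℝ := fun k i => δ i k with hf
  set z : ℤ → ℝ := fun _ => 0 with hz
  set s : ℝ := Real.sqrt (m : ℝ) with hs
  have hs0 : 0 < s := by
    rw [hs]
    apply Real.sqrt_pos.mpr
    have : (0 : ℕ) < m := by omega
    exact_mod_cast this
  have hperf : ∀ j, Per m (f j) := by
    intro j i
    show δ (i + ((m : ℕ) : ℤ)) j = δ i j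
    have : ((m : ℕ) : ℤ) = 2 * (n : ℤ) := by rw [hm]; push_cast; ring
    rw [this]
    exact hδper i j
  -- the recurrence in operator form
  have hrec2 : ∀ k' (i : ℤ), u (k' + 2) i = 2 * Mop a (u (k' + 1)) i - u k' i + f (k' + 2) i := by
    intro k' i
    have h := hrec i (k' + 1) (by omega)
    simp only [Nat.add_sub_cancel] at h
    show Δ i (k' + 2) = 2 * Mop a (fun t => Δ t (k' + 1)) i - Δ i k' + δ i (k' + 2)
    unfold Mop
    rw [show k' + 1 + 1 = k' + 2 from rfl] at h
    rw [h]
    ring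
  have hdu := duhamel (a := a) (u := u) (f := f) (fun i => h0 i) (fun i => h1 i) hrec2
  -- bounds on the norms of the local errors
  have hnf0 : nrm m (f 0) ≤ s * d0 := nrm_le_of_bound hd0 hb0
  have hnf1 : nrm m (f 1) ≤ s * d1 := nrm_le_of_bound hd1 hb1
  have hnfk : ∀ j, 2 ≤ j → nrm m (f j) ≤ s * d := fun j hj =>
    nrm_le_of_bound hd (fun i => hbk i j hj)
  -- the global bound on nrm m (u k)
  have key : nrm m (u k) ≤ s * (((k : ℝ) + 1) * ((k : ℝ) + 2) * d / 2) := by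
    have hfun : u k = fun i => evol a (f 0) (f 1) k i
        + (fun t => ∑ j ∈ Finset.Icc 2 k, evol a z (f j) (k + 1 - j) t) i :=
      funext fun i => hdu k i
    have step1 : nrm m (u k)
        ≤ nrm m (evol a (f 0) (f 1) k)
          + ∑ j ∈ Finset.Icc 2 k, nrm m (evol a z (f j) (k + 1 - j)) := by
      rw [hfun]
      calc nrm m _ ≤ nrm m (evol a (f 0) (f 1) k)
            + nrm m (fun t => ∑ j ∈ Finset.Icc 2 k, evol a z (f j) (k + 1 - j) t) :=
          nrm_add_le m _ _
        _ ≤ _ := by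
            have := nrm_sum_le m (Finset.Icc 2 k)
              (fun j => evol a z (f j) (k + 1 - j))
            linarith
    have step2 : ∑ j ∈ Finset.Icc 2 k, nrm m (evol a z (f j) (k + 1 - j))
        ≤ ((k : ℝ) * ((k : ℝ) - 1) / 2) * (s * d) := by
      have hterm : ∀ j ∈ Finset.Icc 2 k,
          nrm m (evol a z (f j) (k + 1 - j)) ≤ ((k + 1 - j : ℕ) : ℝ) * (s * d) := by
        intro j hj
        have hj2 : 2 ≤ j := (Finset.mem_Icc.mp hj).1
        have hg := grow ha0' ha1 (hperf j) (k + 1 - j)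
        have hb := hnfk j hj2
        have hcast : (0 : ℝ) ≤ ((k + 1 - j : ℕ) : ℝ) := Nat.cast_nonneg _
        calc nrm m (evol a z (f j) (k + 1 - j))
            ≤ ((k + 1 - j : ℕ) : ℝ) * nrm m (f j) := hg
          _ ≤ ((k + 1 - j : ℕ) : ℝ) * (s * d) :=
              mul_le_mul_of_nonneg_left hb hcast
      calc ∑ j ∈ Finset.Icc 2 k, nrm m (evol a z (f j) (k + 1 - j))
          ≤ ∑ j ∈ Finset.Icc 2 k, ((k + 1 - j : ℕ) : ℝ) * (s * d) :=
            Finset.sum_le_sum hterm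
        _ = (∑ j ∈ Finset.Icc 2 k, ((k + 1 - j : ℕ) : ℝ)) * (s * d) := by
            rw [Finset.sum_mul]
        _ ≤ ((k : ℝ) * ((k : ℝ) - 1) / 2) * (s * d) := by
            apply mul_le_mul_of_nonneg_right (sum_weights_le k)
            positivity
    -- bound on the initial-data part
    rcases Nat.eq_zero_or_pos k with hk0 | hkpos
    · subst hk0
      have : nrm m (evol a (f 0) (f 1) 0) = nrm m (f 0) := by rw [evol_zero]
      rw [this] at step1
      simp only [show Finset.Icc 2 0 = (∅ : Finset ℕ) from rfl, Finset.sum_empty] at step1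
      have : nrm m (u 0) ≤ s * d0 := by linarith
      have hsd : s * d0 ≤ s * d := mul_le_mul_of_nonneg_left hc1 (le_of_lt hs0)
      push_cast
      nlinarith [hs0]
    · obtain ⟨K, rfl⟩ : ∃ K, k = K + 1 := ⟨k - 1, by omega⟩
      have hinit : nrm m (evol a (f 0) (f 1) (K + 1))
          ≤ (K : ℝ) * (s * d0) + ((K : ℝ) + 1) * (s * d1) := by
        have hsplit : evol a (f 0) (f 1) (K + 1)
            = fun i => evol a (f 0) z (K + 1) i + evol a z (f 1) (K + 1) i :=
          funext fun i => evol_split a (f 0) (f 1) (K + 1) i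
        have hdelay : evol a (f 0) z (K + 1) = evol a z (fun t => -(f 0) t) K :=
          funext fun i => evol_delay a (f 0) K i
        have hpernf0 : Per m (fun t => -(f 0) t) := by
          intro i
          show -(f 0) (i + (m : ℤ)) = -(f 0) i
          rw [hperf 0 i]
        have hg0 : nrm m (evol a (f 0) z (K + 1)) ≤ (K : ℝ) * (s * d0) := by
          rw [hdelay]
          calc nrm m (evol a z (fun t => -(f 0) t) K)
              ≤ (K : ℝ) * nrm m (fun t => -(f 0) t) := grow ha0' ha1 hpernf0 K
            _ = (K : ℝ) * nrm m (f 0) := by rw [nrm_neg]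
            _ ≤ (K : ℝ) * (s * d0) :=
                mul_le_mul_of_nonneg_left hnf0 (Nat.cast_nonneg K)
        have hg1 : nrm m (evol a z (f 1) (K + 1)) ≤ ((K : ℝ) + 1) * (s * d1) := by
          calc nrm m (evol a z (f 1) (K + 1))
              ≤ ((K + 1 : ℕ) : ℝ) * nrm m (f 1) := grow ha0' ha1 (hperf 1) (K + 1)
            _ = ((K : ℝ) + 1) * nrm m (f 1) := by push_cast; ring
            _ ≤ ((K : ℝ) + 1) * (s * d1) := by
                apply mul_le_mul_of_nonneg_left hnf1
                positivity
        rw [hsplit]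
        calc nrm m _ ≤ nrm m (evol a (f 0) z (K + 1)) + nrm m (evol a z (f 1) (K + 1)) :=
            nrm_add_le m _ _
          _ ≤ _ := by linarith
      -- arithmetic conclusion
      have hKr : (0 : ℝ) ≤ (K : ℝ) := Nat.cast_nonneg K
      have harith : (K : ℝ) * (s * d0) + ((K : ℝ) + 1) * (s * d1)
            + (((K : ℝ) + 1) * (((K : ℝ) + 1) - 1) / 2) * (s * d)
          ≤ s * ((((K : ℝ) + 1) + 1) * (((K : ℝ) + 1) + 2) * d / 2) := by
        have h1 : (K : ℝ) * d0 + ((K : ℝ) + 1) * d1 ≤ ((K : ℝ) + 1) * d := by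
          nlinarith
        have hsd : 0 ≤ s * d := mul_nonneg hs0.le hd
        have h2 : s * ((K : ℝ) * d0 + ((K : ℝ) + 1) * d1) ≤ s * (((K : ℝ) + 1) * d) :=
          mul_le_mul_of_nonneg_left h1 hs0.le
        nlinarith [hsd, h2, hKr, mul_nonneg hsd hKr]
      push_cast
      push_cast at step1 step2 hinit harith
      linarith
  -- convert the conclusion
  have hdbl : inn m (u k) (u k) = 2 * ∑ i ∈ Finset.range n, Δ (i : ℤ) k ^ 2 :=
    double_sum n (fun i => Δ i k) (fun i => hΔper i k) (fun i => hΔodd i k)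
  have hnpos : (0 : ℝ) < (n : ℝ) := by exact_mod_cast hn
  have hip : (1 / (n : ℝ)) * ∑ i ∈ Finset.range n, (Δ (i : ℤ) k) ^ 2
      = inn m (u k) (u k) * (1 / (m : ℝ)) := by
    rw [hdbl, hm]
    push_cast
    field_simp
  rw [hip, Real.sqrt_mul (inn_self_nonneg m (u k)), one_div, Real.sqrt_inv]
  have hnrm : Real.sqrt (inn m (u k) (u k)) = nrm m (u k) := rfl
  rw [hnrm, ← hs]
  calc nrm m (u k) * s⁻¹ ≤ (s * (((k : ℝ) + 1) * ((k : ℝ) + 2) * d / 2)) * s⁻¹ := by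
        apply mul_le_mul_of_nonneg_right key
        positivity
    _ = ((k : ℝ) + 1) * ((k : ℝ) + 2) * d / 2 := by
        field_simp
end
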